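/- arXiv:2603.22914 — 2 statements merged into one kernel-verified Lean document; each statement's English description precedes it below -/
import Mathlib

section
/- Let β_x, β_y ∈ ℝ with (β_x, β_y) ≠ (0, 0), and let S₁ : ℝ → ℝ → ℝ → ℝ (written S₁(t, x, y)). Assume that for every t ∈ ℝ the map (x, y) ↦ S₁(t, x, y) is differentiable on ℝ², and that β_y · ∂S₁/∂x(t, x, y) = β_x · ∂S₁/∂y(t, x, y) for all t, x, y. Then there exists a function G : ℝ × ℝ → ℝ such that for every t the map a ↦ G(t, a) is differentiable and S₁(t, x, y) = G(t, x·β_x + y·β_y) for all t, x, y. -/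
/-- Theorem 3 (forward direction): if `β_y · S'_{1,x} = β_x · S'_{1,y}`
everywhere, with `(β_x, β_y) ≠ (0, 0)` and `(x, y) ↦ S₁ (t, x, y)`
differentiable for each `t`, then `S₁` is a single-index model:
`S₁ (t, x, y) = G (t, x β_x + y β_y)` for some `G` differentiable in its
second argument. -/
theorem stmt3 (βx βy : ℝ) (hβ : (βx, βy) ≠ (0, 0))
    (S₁ : ℝ → ℝ → ℝ → ℝ)
    (hdiff : ∀ t : ℝ, Differentiable ℝ (fun p : ℝ × ℝ => S₁ t p.1 p.2))
    (hprop : ∀ t x y : ℝ,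
      βy * deriv (fun x' => S₁ t x' y) x = βx * deriv (fun y' => S₁ t x y') y) :
    ∃ G : ℝ → ℝ → ℝ, (∀ t : ℝ, Differentiable ℝ (fun a => G t a)) ∧
      ∀ t x y : ℝ, S₁ t x y = G t (x * βx + y * βy) := by
  have hn : βx ^ 2 + βy ^ 2 ≠ 0 := by
    intro h
    apply hβ
    have hx : βx = 0 := by nlinarith [sq_nonneg βx, sq_nonneg βy]
    have hy : βy = 0 := by nlinarith [sq_nonneg βx, sq_nonneg βy]
    simp [hx, hy]
  -- partial derivatives via fderiv
  have hpart : ∀ t (a b : ℝ),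
      deriv (fun x' => S₁ t x' b) a
        = fderiv ℝ (fun p : ℝ × ℝ => S₁ t p.1 p.2) (a, b) (1, 0) ∧
      deriv (fun y' => S₁ t a y') b
        = fderiv ℝ (fun p : ℝ × ℝ => S₁ t p.1 p.2) (a, b) (0, 1) := by
    intro t a b
    have hF := ((hdiff t) (a, b)).hasFDerivAt
    constructor
    · have h1 : HasDerivAt (fun x' : ℝ => S₁ t x' b)
          (fderiv ℝ (fun p : ℝ × ℝ => S₁ t p.1 p.2) (a, b) (1, 0)) a := by
        have hc : HasDerivAt (fun x' : ℝ => ((x' : ℝ), b)) ((1 : ℝ), (0 : ℝ)) a :=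
          (hasDerivAt_id a).prodMk (hasDerivAt_const a b)
        exact hF.comp_hasDerivAt a hc
      exact h1.deriv
    · have h2 : HasDerivAt (fun y' : ℝ => S₁ t a y')
          (fderiv ℝ (fun p : ℝ × ℝ => S₁ t p.1 p.2) (a, b) (0, 1)) b := by
        have hc : HasDerivAt (fun y' : ℝ => ((a : ℝ), y')) ((0 : ℝ), (1 : ℝ)) b :=
          (hasDerivAt_const b a).prodMk (hasDerivAt_id b)
        exact hF.comp_hasDerivAt b hc
      exact h2.deriv
  -- constancy along the null direction
  have key : ∀ t x y s : ℝ, S₁ t (x + s * βy) (y - s * βx) = S₁ t x y := by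
    intro t x y s
    set f : ℝ → ℝ := fun s => S₁ t (x + s * βy) (y - s * βx) with hf
    have hfd : ∀ u : ℝ, HasDerivAt f 0 u := by
      intro u
      have hF := ((hdiff t) (x + u * βy, y - u * βx)).hasFDerivAt
      set D := fderiv ℝ (fun p : ℝ × ℝ => S₁ t p.1 p.2) (x + u * βy, y - u * βx)
        with hD
      have hc : HasDerivAt (fun s : ℝ => (x + s * βy, y - s * βx)) (βy, -βx) u := by
        have h1 : HasDerivAt (fun s : ℝ => x + s * βy) βy u := by
          simpa [mul_comm] using ((hasDerivAt_id u).const_mul βy).const_add x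
        have h2 : HasDerivAt (fun s : ℝ => y - s * βx) (-βx) u := by
          simpa [mul_comm] using ((hasDerivAt_id u).const_mul βx).const_sub y
        exact h1.prodMk h2
      have hcomp : HasDerivAt f (D (βy, -βx)) u := by have := hF.comp_hasDerivAt u hc; exact this
      have hval : D (βy, -βx) = 0 := by
        have hsplit : ((βy : ℝ), -βx) = βy • ((1 : ℝ), (0 : ℝ)) + (-βx) • ((0 : ℝ), (1 : ℝ)) := by
          simp [Prod.ext_iff]
        rw [hsplit, map_add, map_smul, map_smul]
        have hp := hpart t (x + u * βy) (y - u * βx)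
        have hprop' := hprop t (x + u * βy) (y - u * βx)
        rw [hp.1, hp.2] at hprop'
        simp only [smul_eq_mul, ← hD] at *
        linarith
      rwa [hval] at hcomp
    have hconst : f s = f 0 :=
      is_const_of_deriv_eq_zero (fun u => (hfd u).differentiableAt)
        (fun u => (hfd u).deriv) s 0
    simpa [hf] using hconst
  set n : ℝ := βx ^ 2 + βy ^ 2 with hnn
  refine ⟨fun t a => S₁ t (a * βx / n) (a * βy / n), ?_, ?_⟩
  · intro t
    have : Differentiable ℝ (fun a : ℝ => ((a * βx / n, a * βy / n) : ℝ × ℝ)) := by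
      fun_prop
    exact (hdiff t).comp this
  · intro t x y
    set a := x * βx + y * βy with ha
    have hrep : ∃ s : ℝ, a * βx / n = x + s * βy ∧ a * βy / n = y - s * βx := by
      refine ⟨(y * βx - x * βy) / n, ?_, ?_⟩ <;> field_simp <;> ring
    obtain ⟨s, h1, h2⟩ := hrep
    show S₁ t x y = S₁ t (a * βx / n) (a * βy / n)
    rw [h1, h2, key]
end

section
/- Let β_x, β_y ∈ ℝ with β_y ≠ 0, let G : ℝ × ℝ → ℝ, C : ℝ × ℝ → ℝ and S₂ : ℝ → ℝ, and define π(t, x, y) = C( G(t, x·β_x + y·β_y), S₂(t) ). Fix (t, x, y) and assume: (i) the map a ↦ G(t, a) is differentiable at a = xβ_x + yβ_y with derivative ∂₂G(t, a); (ii) the map u ↦ C(u, S₂(t)) is differentiable at u = G(t, xβ_x + yβ_y) with derivative ∂₁C; and (iii) ∂₁C · ∂₂G(t, xβ_x + yβ_y) ≠ 0. Then the partial derivatives ∂π/∂x(t, x, y) and ∂π/∂y(t, x, y) exist, ∂π/∂y(t, x, y) ≠ 0, and ∂π/∂x(t, x, y) / ∂π/∂y(t, x, y) = β_x / β_y. 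-/
/-- Corollary 1: under the exclusion restriction with a single-index risk-1
margin, `π (t, x, y) = C (G (t, x β_x + y β_y), S₂ t)`, the relative covariate
effect on the overall survival equals `β_x / β_y`. -/
theorem stmt7 (βx βy : ℝ) (hβy : βy ≠ 0)
    (G : ℝ → ℝ → ℝ) (C : ℝ → ℝ → ℝ) (S₂ : ℝ → ℝ)
    (t x y g' c' : ℝ)
    (hG : HasDerivAt (fun a => G t a) g' (x * βx + y * βy))
    (hC : HasDerivAt (fun u => C u (S₂ t)) c' (G t (x * βx + y * βy)))
    (hne : c' * g' ≠ 0) :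
    ∃ πx πy : ℝ,
      HasDerivAt (fun x' => C (G t (x' * βx + y * βy)) (S₂ t)) πx x ∧
      HasDerivAt (fun y' => C (G t (x * βx + y' * βy)) (S₂ t)) πy y ∧
      πy ≠ 0 ∧ πx / πy = βx / βy := by
  have hx0 : HasDerivAt (fun x' : ℝ => x' * βx + y * βy) βx x := by
    simpa using ((hasDerivAt_id x).mul_const βx).add_const (y * βy)
  have hy0 : HasDerivAt (fun y' : ℝ => x * βx + y' * βy) βy y := by
    simpa using (HasDerivAt.const_add (x * βx) ((hasDerivAt_id y).mul_const βy))
  have hGx := hG.comp x hx0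
  have hGy := hG.comp y hy0
  have hCx := hC.comp x hGx
  have hCy : HasDerivAt (fun y' => C (G t (x * βx + y' * βy)) (S₂ t))
      (c' * (g' * βy)) y := by have := hC.comp y hGy; exact this
  refine ⟨c' * (g' * βx), c' * (g' * βy), hCx, hCy, ?_, ?_⟩
  · intro h
    rcases mul_eq_zero.1 h with h | h
    · exact hne (by simp [h])
    · rcases mul_eq_zero.1 h with h | h
      · exact hne (by simp [h])
      · exact hβy h
  · rw [show c' * (g' * βx) = (c' * g') * βx by ring,
      show c' * (g' * βy) = (c' * g') * βy by ring,
      mul_div_mul_left _ _ hne]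
end
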